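/- The function φ(x, q) = e^{k x²/2}(q − x⁴) intertwines the invariant vector fields ξ_i on ℝ⁴ with the vector fields ζ_i on ℝ: for each i ∈ {1,2,3,4} and all x ∈ ℝ⁴, q ∈ ℝ, Σ_j ξ_i^j(x) · (∂φ/∂x^j)(x, q) = ζ_i(φ(x, q)), where ζ₁ = ζ₃ = 0, ζ₂(q) = 1, and ζ₄(q) = −(k/2) q. -/

import Mathlib

/-- Partial derivative `∂f/∂xⁱ` of a real-valued function on `ℝ⁴`. -/
noncomputable def pd (i : Fin 4) (f : (Fin 4 → ℝ) → ℝ) (x : Fin 4 → ℝ) : ℝ :=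
  fderiv ℝ f x (Pi.single i 1)
/-- The invariant vector fields `ξ₁,…,ξ₄` (indices `0,…,3`). -/
noncomputable def ξ (k : ℝ) (i : Fin 4) (x : Fin 4 → ℝ) : Fin 4 → ℝ :=
  ![![-1, 0, 0, 0],
    ![-k * x 2 * Real.exp (-(k * x 1) / 2), 0, 0, -Real.exp (-(k * x 1) / 2)],
    ![0, 0, -Real.exp (k * x 1 / 2), 0],
    ![2, -1, 0, 0]] i

/-- The map `φ : ℝ⁴ × ℝ → ℝ`, `φ(x,q) = e^{k x²/2}(q − x⁴)`. -/
noncomputable def φmap (k : ℝ) (x : Fin 4 → ℝ) (q : ℝ) : ℝ :=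
  Real.exp (k * x 1 / 2) * (q - x 3)

/-- The vector fields `ζ₁ = 0`, `ζ₂ = 1`, `ζ₃ = 0`, `ζ₄(q) = −(k/2) q` on `ℝ`. -/
noncomputable def ζ (k : ℝ) (i : Fin 4) (q : ℝ) : ℝ :=
  ![0, 1, 0, -(k / 2) * q] i

open Real

lemma sum_mul_pd_eq_fderiv (f : (Fin 4 → ℝ) → ℝ) (x v : Fin 4 → ℝ) :
    ∑ j : Fin 4, v j * pd j f x = fderiv ℝ f x v := by
  conv_rhs => rw [pi_eq_sum_univ' v]
  simp only [map_sum, map_smul, smul_eq_mul, pd]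

lemma fderiv_φmap_apply (k q : ℝ) (x v : Fin 4 → ℝ) :
    fderiv ℝ (fun y => φmap k y q) x v = k / 2 * v 1 * φmap k x q - exp (k * x 1 / 2) * v 3 := by
  have hφ := (((hasFDerivAt_apply (𝕜 := ℝ) (1 : Fin 4) x).const_mul (k / 2)).exp).fun_mul
    ((hasFDerivAt_apply (𝕜 := ℝ) (3 : Fin 4) x).const_sub q)
  rw [show (fun y => φmap k y q) = fun y => exp (k / 2 * y 1) * (q - y 3) by
    ext y; rw [φmap, mul_div_right_comm], hφ.fderiv]
  simp only [add_apply, smul_apply, neg_apply, ContinuousLinearMap.proj_apply, smul_eq_mul,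
    φmap, mul_div_right_comm]
  ring

theorem phi_intertwines_general (k : ℝ) (i : Fin 4) (x : Fin 4 → ℝ) (q : ℝ) :
    ∑ j : Fin 4, ξ k i x j * pd j (fun y => φmap k y q) x = ζ k i (φmap k x q) := by
  rw [sum_mul_pd_eq_fderiv, fderiv_φmap_apply]
  have hinv : exp (k * x 1 / 2) * exp (-(k * x 1) / 2) = 1 := by
    rw [← exp_add, neg_div, add_neg_cancel, exp_zero]
  fin_cases i <;> simp [ξ, ζ, hinv]

/-- The map `φ` intertwines the invariant fields `ξ_i` on `ℝ⁴` with the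
fields `ζ_i` on `ℝ`: `Σ_j ξ_i^j(x) ∂φ/∂x^j(x,q) = ζ_i(φ(x,q))`. -/
theorem phi_intertwines (k : ℝ) (hk : 0 < k) (i : Fin 4) (x : Fin 4 → ℝ) (q : ℝ) :
    ∑ j : Fin 4, ξ k i x j * pd j (fun y => φmap k y q) x = ζ k i (φmap k x q) :=
  phi_intertwines_general k i x q
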